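/- arXiv:2312.08845 — 2 statements merged into one kernel-verified Lean document; each statement's English description precedes it below -/
import Mathlib

section
/- Let Rad be an irreducible root system in a finite-dimensional real inner product space V, let Λ = ℤ[Rad] be the additive subgroup of V generated by Rad, and let η : Λ → {1, −1} be a group homomorphism (from (Λ,+) to ({±1},·)). Then there exists a regular vector v ∈ V such that η(α) = −1 for at most one simple root α ∈ B(v). -/
/-!
Write `η ζ = (-1) ^ ⟪ζ, μ⟫` for a vector `μ` pairing integrally with all roots (a suitable sum of
fundamental coweights of any base does), and take such a `μ` of minimal norm. Perturbing `μ` in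
a regular direction gives a regular `v` with `⟪α, μ⟫ ≥ 0` for every simple root `α` of `B(v)`,
and `⟪α, μ⟫` is odd, hence `≥ 1`, when `η α = -1`. If this happened for two simple roots
`α ≠ β`, then `μ - 2 ϖ_β` (with `ϖ_β` the fundamental coweight) also represents `η`, and
minimality gives `⟪μ, ϖ_β⟫ ≤ ‖ϖ_β‖²`. Expanding `ϖ_β` in the base, whose Gram matrix has
nonpositive off-diagonal entries, this forces the `α`-coordinate of `ϖ_β` to vanish. But for an
irreducible root system all coordinates of a fundamental coweight are positive: their support
is a set of simple roots orthogonal to the remaining ones, and every root lies in the span of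
one of the two parts.
-/

open scoped RealInnerProductSpace

namespace PaperRS

variable {V : Type*} [NormedAddCommGroup V] [InnerProductSpace ℝ V]

/-- The reflection in a root `α`. -/
noncomputable def reflRoot (α x : V) : V := x - (2 * ⟪x, α⟫ / ⟪α, α⟫) • α

/-- `Rad` is a (reduced, crystallographic) root system in `V`. -/
structure IsRootSystem (Rad : Set V) : Prop where
  finite : Rad.Finite
  nonzero : ∀ α ∈ Rad, α ≠ 0
  spanning : Submodule.span ℝ Rad = ⊤
  integral : ∀ α ∈ Rad, ∀ β ∈ Rad, ∃ n : ℤ, 2 * ⟪β, α⟫ / ⟪α, α⟫ = (n : ℝ)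
  reflMem : ∀ α ∈ Rad, ∀ β ∈ Rad, reflRoot α β ∈ Rad
  reduced : ∀ α ∈ Rad, ∀ c : ℝ, c • α ∈ Rad → c = 1 ∨ c = -1

/-- Irreducibility: `Rad` is not the union of two nonempty mutually orthogonal subsets. -/
def IsIrreducible (Rad : Set V) : Prop :=
  ¬ ∃ R₁ R₂ : Set V, R₁.Nonempty ∧ R₂.Nonempty ∧ Rad = R₁ ∪ R₂ ∧
      ∀ α ∈ R₁, ∀ β ∈ R₂, ⟪α, β⟫ = 0

/-- An involution of the root system `Rad`: an orthogonal linear automorphism `t` of `V`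
with `t(Rad) = Rad` and `t ∘ t = id`. -/
structure IsInvolution (Rad : Set V) (t : V ≃ₗᵢ[ℝ] V) : Prop where
  maps : (⇑t) '' Rad = Rad
  invol : ∀ x : V, t (t x) = x

/-- Two roots are strongly orthogonal if neither their sum nor their difference is a root. -/
def StronglyOrthogonal (Rad : Set V) (α β : V) : Prop :=
  α ≠ β ∧ α ≠ -β ∧ α + β ∉ Rad ∧ α - β ∉ Rad

/-- A vector is regular for `Rad` if it is orthogonal to no root. -/
def IsRegular (Rad : Set V) (v : V) : Prop := ∀ α ∈ Rad, ⟪α, v⟫ ≠ 0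

/-- The positive roots determined by a regular vector `v`. -/
def posRoots (Rad : Set V) (v : V) : Set V := {α ∈ Rad | 0 < ⟪α, v⟫}

/-- The base of simple roots determined by a regular vector `v`: the positive roots which
are not sums of two positive roots. -/
def simpleBase (Rad : Set V) (v : V) : Set V :=
  {α ∈ posRoots Rad v | ¬ ∃ β ∈ posRoots Rad v, ∃ γ ∈ posRoots Rad v, α = β + γ}

/-- A regular vector `v` is an S-chamber vector for an involution `t` if
`(α,v)·(t α,v) > 0` for every complex root `α` (i.e. every root with `t α ≠ ±α`). -/
def IsSChamber (Rad : Set V) (t : V ≃ₗᵢ[ℝ] V) (v : V) : Prop :=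
  IsRegular Rad v ∧
    ∀ α ∈ Rad, t α ≠ α → t α ≠ -α → 0 < ⟪α, v⟫ * ⟪t α, v⟫

/-- `P ⊆ Rad` is parabolic if `P ∪ (-P) = Rad` and `P` is closed under root addition. -/
def IsParabolic (Rad P : Set V) : Prop :=
  P ⊆ Rad ∧ (∀ α ∈ Rad, α ∈ P ∨ -α ∈ P) ∧
    ∀ α ∈ P, ∀ β ∈ P, α + β ∈ Rad → α + β ∈ P

/-- Composition `s_{β 0} ∘ s_{β 1} ∘ ⋯ ∘ s_{β (r-1)}` of the reflections in the roots
`β 0, …, β (r-1)`. -/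
noncomputable def reflComp : (r : ℕ) → (Fin r → V) → V → V
  | 0, _ => id
  | r + 1, β => reflRoot (β 0) ∘ reflComp r (fun i => β i.succ)

section RootSystem

variable {Rad : Set V} {α β γ : V}

lemma reflRoot_add_of_inner_eq_zero (hβ : β ≠ 0) (h : ⟪γ, β⟫ = 0) :
    reflRoot β (β + γ) = γ - β := by
  have hββ : ⟪β, β⟫ ≠ 0 := inner_self_ne_zero.2 hβ
  rw [reflRoot, inner_add_left, h, add_zero, mul_div_assoc, div_self hββ, mul_one, two_smul]
  abel

namespace IsRootSystem

lemma neg_mem (hRS : IsRootSystem Rad) (hα : α ∈ Rad) : -α ∈ Rad := by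
  have h := hRS.reflMem α hα (α + 0) (by rwa [add_zero])
  rwa [reflRoot_add_of_inner_eq_zero (hRS.nonzero α hα) (inner_zero_left α), zero_sub] at h

lemma sub_mem_of_add_mem_of_inner_eq_zero (hRS : IsRootSystem Rad) (hβ : β ∈ Rad)
    (hβγ : β + γ ∈ Rad) (h : ⟪γ, β⟫ = 0) : γ - β ∈ Rad :=
  reflRoot_add_of_inner_eq_zero (hRS.nonzero β hβ) h ▸ hRS.reflMem β hβ _ hβγ

/-- If `⟪α, β⟫ > 0`, the Cartan integers `2⟪α, β⟫/⟪β, β⟫` and `2⟪β, α⟫/⟪α, α⟫` are positive, and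
they cannot both be `≥ 2` since then `‖α - β‖² ≤ 0`; so one of them is `1`. -/
lemma sub_mem_of_inner_pos (hRS : IsRootSystem Rad) (hα : α ∈ Rad) (hβ : β ∈ Rad)
    (hne : α ≠ β) (hpos : 0 < ⟪α, β⟫) : α - β ∈ Rad := by
  have hαα : 0 < ⟪α, α⟫ := real_inner_self_pos.2 (hRS.nonzero α hα)
  have hββ : 0 < ⟪β, β⟫ := real_inner_self_pos.2 (hRS.nonzero β hβ)
  have two_le {x y : V} (hx : x ∈ Rad) (hy : y ∈ Rad) (hxx : 0 < ⟪x, x⟫) (hxy : 0 < ⟪y, x⟫)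
      (h : 2 * ⟪y, x⟫ / ⟪x, x⟫ ≠ 1) : ⟪x, x⟫ ≤ ⟪y, x⟫ := by
    obtain ⟨n, hn⟩ := hRS.integral x hx y hy
    have hn0 : 0 < n := by
      have : (0 : ℝ) < n := hn ▸ by positivity
      exact_mod_cast this
    have hn1 : n ≠ 1 := by rintro rfl; exact h (by simpa using hn)
    have : (2 : ℝ) ≤ 2 * ⟪y, x⟫ / ⟪x, x⟫ := hn ▸ (by exact_mod_cast (by omega : 2 ≤ n))
    rw [le_div_iff₀ hxx] at this
    linarith
  have hcases : 2 * ⟪α, β⟫ / ⟪β, β⟫ = 1 ∨ 2 * ⟪β, α⟫ / ⟪α, α⟫ = 1 := by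
    by_contra! h
    have h₁ := two_le hβ hα hββ hpos h.1
    have h₂ := real_inner_comm α β ▸ two_le hα hβ hαα (real_inner_comm α β ▸ hpos) h.2
    have : ⟪α - β, α - β⟫ ≤ 0 := by
      rw [inner_sub_left, inner_sub_right, inner_sub_right, real_inner_comm α β]
      linarith
    exact hne (sub_eq_zero.1 (real_inner_self_nonpos.1 this))
  rcases hcases with h | h
  · have hmem := hRS.reflMem β hβ α hα
    rwa [reflRoot, h, one_smul] at hmem
  · have hmem := hRS.neg_mem (hRS.reflMem α hα β hβ)
    rwa [reflRoot, h, one_smul, neg_sub] at hmem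

end IsRootSystem

end RootSystem

section Obtuse

variable {ι : Type*}

lemma inner_sum_posPart_smul_sum_negPart_smul_nonpos [Fintype ι] (x : ι → V)
    (hx : Pairwise fun i j => ⟪x i, x j⟫ ≤ 0) (c : ι → ℝ) :
    ⟪∑ i, (c i)⁺ • x i, ∑ i, (c i)⁻ • x i⟫ ≤ 0 := by
  rw [sum_inner]
  refine Finset.sum_nonpos fun i _ => ?_
  rw [inner_sum]
  refine Finset.sum_nonpos fun j _ => ?_
  rw [real_inner_smul_left, real_inner_smul_right]
  rcases eq_or_ne i j with rfl | hij
  · have h : (c i)⁺ * (c i)⁻ = 0 := by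
      rcases le_total (c i) 0 with h | h
      · rw [posPart_eq_zero.2 h, zero_mul]
      · rw [negPart_eq_zero.2 h, mul_zero]
    linear_combination ⟪x i, x i⟫ * h
  · exact mul_nonpos_of_nonneg_of_nonpos (posPart_nonneg _)
      (mul_nonpos_of_nonneg_of_nonpos (negPart_nonneg _) (hx hij))

lemma linearIndependent_of_pairwise_inner_nonpos [Finite ι] {v : V} (x : ι → V)
    (hx : Pairwise fun i j => ⟪x i, x j⟫ ≤ 0) (hv : ∀ i, 0 < ⟪x i, v⟫) :
    LinearIndependent ℝ x := by
  cases nonempty_fintype ι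
  have eq_zero_of_nonneg (a : ι → ℝ) (ha : ∀ i, 0 ≤ a i) (hsum : ∑ i, a i • x i = 0) (i : ι) :
      a i = 0 := by
    have h0 : ∑ j, a j * ⟪x j, v⟫ = 0 := by
      simpa [sum_inner, real_inner_smul_left] using congrArg (⟪·, v⟫) hsum
    have := (Finset.sum_eq_zero_iff_of_nonneg fun j _ => mul_nonneg (ha j) (hv j).le).1 h0 i
      (Finset.mem_univ _)
    exact (mul_eq_zero.1 this).resolve_right (hv i).ne'
  rw [Fintype.linearIndependent_iff]
  intro c hc i
  have hpq : ∑ i, (c i)⁺ • x i = ∑ i, (c i)⁻ • x i := by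
    rw [← sub_eq_zero, ← Finset.sum_sub_distrib]
    simpa only [← sub_smul, posPart_sub_negPart] using hc
  have hp : ∑ i, (c i)⁺ • x i = 0 := by
    have := inner_sum_posPart_smul_sum_negPart_smul_nonpos x hx c
    rw [← hpq] at this
    exact real_inner_self_nonpos.1 this
  rw [← posPart_sub_negPart (c i), eq_zero_of_nonneg _ (fun _ => posPart_nonneg _) hp i,
    eq_zero_of_nonneg _ (fun _ => negPart_nonneg _) (hpq ▸ hp) i, sub_zero]

lemma repr_nonneg_of_inner_nonneg [Finite ι] (b : Module.Basis ι ℝ V)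
    (hb : Pairwise fun i j => ⟪b i, b j⟫ ≤ 0) {x : V} (hx : ∀ i, 0 ≤ ⟪b i, x⟫) (i : ι) :
    0 ≤ b.repr x i := by
  cases nonempty_fintype ι
  set c : ι → ℝ := ⇑(b.repr x)
  set q := ∑ i, (c i)⁻ • b i
  have hx' : x = ∑ i, (c i)⁺ • b i - q := by
    conv_lhs => rw [← b.sum_repr x]
    simp only [q, ← Finset.sum_sub_distrib, ← sub_smul, posPart_sub_negPart, c]
  have hq : q = 0 := by
    have hqx : 0 ≤ ⟪q, x⟫ := by
      rw [sum_inner]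
      exact Finset.sum_nonneg fun j _ => by
        rw [real_inner_smul_left]; exact mul_nonneg (negPart_nonneg _) (hx j)
    have hpq : ⟪∑ i, (c i)⁺ • b i, q⟫ ≤ 0 := inner_sum_posPart_smul_sum_negPart_smul_nonpos b hb c
    have hqq : ⟪q, q⟫ = ⟪∑ i, (c i)⁺ • b i, q⟫ - ⟪x, q⟫ := by
      rw [hx', inner_sub_left, sub_sub_cancel]
    refine real_inner_self_nonpos.1 ?_
    rw [hqq, real_inner_comm q x]
    linarith
  have hci := congrArg (fun y => b.repr y i) hq
  simp only [q, b.repr_sum_self, map_zero, Finsupp.coe_zero, Pi.zero_apply] at hci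
  exact negPart_eq_zero.1 hci

lemma inner_eq_zero_of_repr_pos [Finite ι] (b : Module.Basis ι ℝ V)
    (hb : Pairwise fun i j => ⟪b i, b j⟫ ≤ 0) {x : V} (hx : ∀ j, 0 ≤ b.repr x j) {i k : ι}
    (hk : ⟪b k, x⟫ = 0) (hxk : b.repr x k = 0) (hxi : 0 < b.repr x i) : ⟪b k, b i⟫ = 0 := by
  cases nonempty_fintype ι
  have hterm (j : ι) : b.repr x j * ⟪b k, b j⟫ ≤ 0 := by
    rcases eq_or_ne j k with rfl | hjk
    · rw [hxk, zero_mul]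
    · exact mul_nonpos_of_nonneg_of_nonpos (hx j) (hb hjk.symm)
  have hsum : ∑ j, b.repr x j * ⟪b k, b j⟫ = 0 := by
    rw [← hk]
    conv_rhs => rw [← b.sum_repr x]
    simp only [inner_sum, real_inner_smul_right]
  have := (Finset.sum_eq_zero_iff_of_nonpos fun j _ => hterm j).1 hsum i (Finset.mem_univ _)
  exact (mul_eq_zero.1 this).resolve_left hxi.ne'

end Obtuse

section SimpleBase

variable {Rad : Set V} {α β ζ v : V}

lemma IsRegular.mem_posRoots_or_neg_mem_posRoots (hv : IsRegular Rad v)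
    (hRS : IsRootSystem Rad) (hζ : ζ ∈ Rad) :
    ζ ∈ posRoots Rad v ∨ -ζ ∈ posRoots Rad v := by
  rcases (hv ζ hζ).lt_or_gt with h | h
  · exact Or.inr ⟨hRS.neg_mem hζ, by rw [inner_neg_left]; linarith⟩
  · exact Or.inl ⟨hζ, h⟩

theorem posRoots_induction (hfin : Rad.Finite) {p : V → Prop}
    (simple : ∀ α ∈ simpleBase Rad v, p α)
    (add : ∀ β ∈ posRoots Rad v, ∀ γ ∈ posRoots Rad v, β + γ ∈ posRoots Rad v →
      p β → p γ → p (β + γ)) :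
    ∀ ζ ∈ posRoots Rad v, p ζ := by
  have hwf : (posRoots Rad v).WellFoundedOn (Function.onFun (· < ·) fun x => ⟪x, v⟫) :=
    Set.wellFoundedOn_image.1 ((hfin.subset fun _ h => h.1).image _).wellFoundedOn
  intro ζ hζ
  refine hwf.induction hζ fun ζ hζ ih => ?_
  by_cases hs : ζ ∈ simpleBase Rad v
  · exact simple ζ hs
  obtain ⟨β, hβ, γ, hγ, rfl⟩ : ∃ β ∈ posRoots Rad v, ∃ γ ∈ posRoots Rad v, ζ = β + γ := by
    by_contra h
    exact hs ⟨hζ, h⟩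
  have hsum : ⟪β + γ, v⟫ = ⟪β, v⟫ + ⟪γ, v⟫ := inner_add_left _ _ _
  refine add β hβ γ hγ hζ (ih β hβ ?_) (ih γ hγ ?_) <;>
    simp only [Function.onFun] <;> linarith [hβ.2, hγ.2]

lemma IsRegular.mem_closure_simpleBase (hv : IsRegular Rad v) (hRS : IsRootSystem Rad)
    (hζ : ζ ∈ Rad) : ζ ∈ AddSubgroup.closure (simpleBase Rad v) := by
  have hpos : ∀ ζ ∈ posRoots Rad v, ζ ∈ AddSubgroup.closure (simpleBase Rad v) :=
    posRoots_induction hRS.finite (fun _ h => AddSubgroup.subset_closure h)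
      fun _ _ _ _ _ hβ hγ => add_mem hβ hγ
  rcases hv.mem_posRoots_or_neg_mem_posRoots hRS hζ with h | h
  · exact hpos ζ h
  · simpa using neg_mem (hpos _ h)

lemma inner_nonpos_of_mem_simpleBase (hRS : IsRootSystem Rad) (hv : IsRegular Rad v)
    (hα : α ∈ simpleBase Rad v) (hβ : β ∈ simpleBase Rad v) (hne : α ≠ β) :
    ⟪α, β⟫ ≤ 0 := by
  by_contra! h
  rcases hv.mem_posRoots_or_neg_mem_posRoots hRS
    (hRS.sub_mem_of_inner_pos hα.1.1 hβ.1.1 hne h) with hd | hd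
  · exact hα.2 ⟨β, hβ.1, α - β, hd, by abel⟩
  · exact hβ.2 ⟨α, hα.1, -(α - β), hd, by abel⟩

lemma span_simpleBase (hRS : IsRootSystem Rad) (hv : IsRegular Rad v) :
    Submodule.span ℝ (simpleBase Rad v) = ⊤ := by
  refine eq_top_iff.2 (hRS.spanning ▸ Submodule.span_le.2 fun ζ hζ => ?_)
  exact (AddSubgroup.closure_le (Submodule.span ℝ _).toAddSubgroup).2 Submodule.subset_span
    (hv.mem_closure_simpleBase hRS hζ)

lemma exists_basis_simpleBase (hRS : IsRootSystem Rad) (hv : IsRegular Rad v) :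
    ∃ b : Module.Basis (simpleBase Rad v) ℝ V, Set.range b = simpleBase Rad v := by
  have : Finite (simpleBase Rad v) := (hRS.finite.subset fun _ h => h.1.1).to_subtype
  have li : LinearIndependent ℝ ((↑) : simpleBase Rad v → V) :=
    linearIndependent_of_pairwise_inner_nonpos _
      (fun i j hij => inner_nonpos_of_mem_simpleBase hRS hv i.2 j.2 (Subtype.coe_ne_coe.2 hij))
      fun i => i.2.1.2
  refine ⟨.mk li (by rw [Subtype.range_coe, span_simpleBase hRS hv]), ?_⟩
  rw [Module.Basis.coe_mk, Subtype.range_coe]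

end SimpleBase

section Coordinates

variable {Rad : Set V} {β γ ζ v : V} {ι : Type*} {b : Module.Basis ι ℝ V}

lemma basis_mem_simpleBase (hb : Set.range b = simpleBase Rad v) (i : ι) :
    b i ∈ simpleBase Rad v :=
  hb ▸ Set.mem_range_self i

lemma repr_nonneg_of_mem_posRoots (hfin : Rad.Finite) (hb : Set.range b = simpleBase Rad v)
    (hζ : ζ ∈ posRoots Rad v) (i : ι) : 0 ≤ b.repr ζ i := by
  classical
  refine posRoots_induction hfin (p := fun ζ => ∀ i, 0 ≤ b.repr ζ i) ?_ ?_ ζ hζ i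
  · rintro _ hα i
    obtain ⟨j, rfl⟩ : _ ∈ Set.range b := hb ▸ hα
    rw [b.repr_self_apply]
    split_ifs <;> norm_num
  · intro β _ γ _ _ hβ hγ i
    rw [map_add, Finsupp.add_apply]
    exact add_nonneg (hβ i) (hγ i)

lemma repr_nonneg_or_nonpos (hRS : IsRootSystem Rad) (hv : IsRegular Rad v)
    (hb : Set.range b = simpleBase Rad v) (hζ : ζ ∈ Rad) :
    (∀ i, 0 ≤ b.repr ζ i) ∨ ∀ i, b.repr ζ i ≤ 0 := by
  rcases hv.mem_posRoots_or_neg_mem_posRoots hRS hζ with h | h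
  · exact Or.inl (repr_nonneg_of_mem_posRoots hRS.finite hb h)
  · exact Or.inr fun i => by simpa using repr_nonneg_of_mem_posRoots hRS.finite hb h i

lemma exists_int_repr (hRS : IsRootSystem Rad) (hv : IsRegular Rad v)
    (hb : Set.range b = simpleBase Rad v) (hζ : ζ ∈ Rad) (i : ι) : ∃ n : ℤ, b.repr ζ i = n := by
  classical
  suffices ∀ x ∈ AddSubgroup.closure (simpleBase Rad v), ∃ n : ℤ, b.repr x i = n from
    this ζ (hv.mem_closure_simpleBase hRS hζ)
  intro x hx
  induction hx using AddSubgroup.closure_induction with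
  | mem α hα =>
    obtain ⟨j, rfl⟩ : α ∈ Set.range b := hb ▸ hα
    rw [b.repr_self_apply]
    split_ifs
    exacts [⟨1, Int.cast_one.symm⟩, ⟨0, Int.cast_zero.symm⟩]
  | zero => exact ⟨0, by simp⟩
  | add x y _ _ hx hy =>
    obtain ⟨m, hm⟩ := hx
    obtain ⟨n, hn⟩ := hy
    exact ⟨m + n, by simp [hm, hn]⟩
  | neg x _ hx =>
    obtain ⟨m, hm⟩ := hx
    exact ⟨-m, by simp [hm]⟩

lemma exists_repr_pos (hRS : IsRootSystem Rad) (hb : Set.range b = simpleBase Rad v)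
    (hζ : ζ ∈ posRoots Rad v) : ∃ i, 0 < b.repr ζ i := by
  by_contra! h
  have : b.repr ζ = 0 :=
    Finsupp.ext fun i => le_antisymm (h i) (repr_nonneg_of_mem_posRoots hRS.finite hb hζ i)
  exact hRS.nonzero ζ hζ.1 (b.repr.map_eq_zero_iff.1 this)

/-- The reflection in `β` maps `β + γ` to `γ - β`, whose coordinates have both signs. -/
lemma add_notMem_of_inner_eq_zero (hRS : IsRootSystem Rad) (hv : IsRegular Rad v)
    (hb : Set.range b = simpleBase Rad v) (hβ : β ∈ Rad) (h : ⟪γ, β⟫ = 0) {i k : ι}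
    (hβi : 0 < b.repr β i) (hγi : b.repr γ i = 0) (hγk : 0 < b.repr γ k)
    (hβk : b.repr β k = 0) : β + γ ∉ Rad := by
  intro hβγ
  rcases repr_nonneg_or_nonpos hRS hv hb
    (hRS.sub_mem_of_add_mem_of_inner_eq_zero hβ hβγ h) with h' | h'
  · have := h' i
    rw [map_sub, Finsupp.sub_apply, hγi] at this
    linarith
  · have := h' k
    rw [map_sub, Finsupp.sub_apply, hβk] at this
    linarith

lemma mem_span_or_mem_span_compl (hRS : IsRootSystem Rad) (hv : IsRegular Rad v)
    (hb : Set.range b = simpleBase Rad v) {S : Set ι}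
    (hS : Submodule.span ℝ (b '' S) ⟂ Submodule.span ℝ (b '' Sᶜ)) (hζ : ζ ∈ Rad) :
    ζ ∈ Submodule.span ℝ (b '' S) ∨ ζ ∈ Submodule.span ℝ (b '' Sᶜ) := by
  have exists_pos_mem {β : V} {T : Set ι} (hβ : β ∈ posRoots Rad v)
      (hβT : β ∈ Submodule.span ℝ (b '' T)) : ∃ i ∈ T, 0 < b.repr β i := by
    obtain ⟨i, hi⟩ := exists_repr_pos hRS hb hβ
    exact ⟨i, b.mem_span_image.1 hβT (Finsupp.mem_support_iff.2 hi.ne'), hi⟩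
  have repr_eq_zero {β : V} {T : Set ι} (hβT : β ∈ Submodule.span ℝ (b '' T)) {i : ι}
      (hi : i ∉ T) : b.repr β i = 0 :=
    Finsupp.notMem_support_iff.1 fun h => hi (b.mem_span_image.1 hβT h)
  have mixed {β γ : V} (hβ : β ∈ posRoots Rad v) (hγ : γ ∈ posRoots Rad v)
      (hβS : β ∈ Submodule.span ℝ (b '' S)) (hγS : γ ∈ Submodule.span ℝ (b '' Sᶜ)) :
      β + γ ∉ Rad := by
    obtain ⟨i, hiS, hi⟩ := exists_pos_mem hβ hβS
    obtain ⟨k, hkS, hk⟩ := exists_pos_mem hγ hγS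
    exact add_notMem_of_inner_eq_zero hRS hv hb hβ.1 (hS.inner_eq hβS hγS ▸ real_inner_comm _ _)
      hi (repr_eq_zero hγS (Set.notMem_compl_iff.2 hiS)) hk (repr_eq_zero hβS hkS)
  have hpos : ∀ ζ ∈ posRoots Rad v,
      ζ ∈ Submodule.span ℝ (b '' S) ∨ ζ ∈ Submodule.span ℝ (b '' Sᶜ) := by
    refine posRoots_induction hRS.finite ?_ ?_
    · rintro _ hα
      obtain ⟨j, rfl⟩ : _ ∈ Set.range b := hb ▸ hα
      by_cases hj : j ∈ S
      · exact Or.inl (Submodule.subset_span (Set.mem_image_of_mem b hj))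
      · exact Or.inr (Submodule.subset_span (Set.mem_image_of_mem b hj))
    · rintro β hβ γ hγ hβγ (hβS | hβS) (hγS | hγS)
      · exact Or.inl (add_mem hβS hγS)
      · exact absurd hβγ.1 (mixed hβ hγ hβS hγS)
      · exact absurd hβγ.1 (add_comm γ β ▸ mixed hγ hβ hγS hβS)
      · exact Or.inr (add_mem hβS hγS)
  rcases hv.mem_posRoots_or_neg_mem_posRoots hRS hζ with h | h
  · exact hpos ζ h
  · simpa using (hpos _ h).imp neg_mem neg_mem

lemma eq_univ_of_isOrtho_span (hRS : IsRootSystem Rad) (hirr : IsIrreducible Rad)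
    (hv : IsRegular Rad v) (hb : Set.range b = simpleBase Rad v) {S : Set ι}
    (hS : Submodule.span ℝ (b '' S) ⟂ Submodule.span ℝ (b '' Sᶜ)) (hne : S.Nonempty) :
    S = Set.univ := by
  by_contra hS'
  obtain ⟨k, hk⟩ := (Set.ne_univ_iff_exists_notMem S).1 hS'
  obtain ⟨j, hj⟩ := hne
  have hbR (i : ι) : b i ∈ Rad := (basis_mem_simpleBase hb i).1.1
  refine hirr ⟨{ζ ∈ Rad | ζ ∈ Submodule.span ℝ (b '' S)},
    {ζ ∈ Rad | ζ ∉ Submodule.span ℝ (b '' S)},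
    ⟨b j, hbR j, Submodule.subset_span (Set.mem_image_of_mem b hj)⟩, ⟨b k, hbR k, ?_⟩, ?_, ?_⟩
  · rw [b.mem_span_image, b.repr_self, Finsupp.support_single _ one_ne_zero]
    simpa using hk
  · ext ζ
    by_cases h : ζ ∈ Submodule.span ℝ (b '' S) <;> simp [h]
  · rintro ζ₁ ⟨-, h₁⟩ ζ₂ ⟨hζ₂, h₂⟩
    exact hS.inner_eq h₁ ((mem_span_or_mem_span_compl hRS hv hb hS hζ₂).resolve_left h₂)

end Coordinates

section FundamentalCoweight

variable [FiniteDimensional ℝ V] {ι : Type*}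

noncomputable def fundCoweight (b : Module.Basis ι ℝ V) (j : ι) : V :=
  (InnerProductSpace.toDual ℝ V).symm (b.coord j).toContinuousLinearMap

lemma inner_fundCoweight (b : Module.Basis ι ℝ V) (j : ι) (x : V) :
    ⟪fundCoweight b j, x⟫ = b.repr x j := by
  rw [fundCoweight, InnerProductSpace.toDual_symm_apply]
  rfl

lemma inner_basis_fundCoweight [DecidableEq ι] (b : Module.Basis ι ℝ V) (i j : ι) :
    ⟪b i, fundCoweight b j⟫ = if i = j then 1 else 0 := by
  rw [real_inner_comm, inner_fundCoweight, b.repr_self_apply]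

/-- For an irreducible root system the inverse Cartan matrix has positive entries. -/
lemma repr_fundCoweight_pos {Rad : Set V} {v : V} (hRS : IsRootSystem Rad)
    (hirr : IsIrreducible Rad) (hv : IsRegular Rad v) {b : Module.Basis ι ℝ V}
    (hb : Set.range b = simpleBase Rad v) (i j : ι) : 0 < b.repr (fundCoweight b j) i := by
  classical
  have : Finite ι := Module.Finite.finite_basis b
  have hob : Pairwise fun k l => ⟪b k, b l⟫ ≤ 0 := fun k l hkl =>
    inner_nonpos_of_mem_simpleBase hRS hv (basis_mem_simpleBase hb k) (basis_mem_simpleBase hb l)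
      (b.injective.ne hkl)
  have hc : ∀ k, 0 ≤ b.repr (fundCoweight b j) k := repr_nonneg_of_inner_nonneg b hob fun k => by
    rw [inner_basis_fundCoweight]
    split_ifs <;> norm_num
  set S := {k | 0 < b.repr (fundCoweight b j) k}
  have hjS : j ∈ S := by
    have hne : fundCoweight b j ≠ 0 := fun h => by
      simpa [h] using inner_basis_fundCoweight b j j
    show 0 < b.repr (fundCoweight b j) j
    rw [← inner_fundCoweight]
    exact real_inner_self_pos.2 hne
  have hS : Submodule.span ℝ (b '' S) ⟂ Submodule.span ℝ (b '' Sᶜ) := by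
    rw [Submodule.isOrtho_span]
    rintro _ ⟨k, hk, rfl⟩ _ ⟨l, hl, rfl⟩
    have hlj : l ≠ j := fun h => hl (h ▸ hjS)
    rw [real_inner_comm]
    exact inner_eq_zero_of_repr_pos b hob hc (by rw [inner_basis_fundCoweight, if_neg hlj])
      (le_antisymm (not_lt.1 hl) (hc l)) hk
  exact (eq_univ_of_isOrtho_span hRS hirr hv hb hS ⟨j, hjS⟩ ▸ Set.mem_univ i : i ∈ S)

end FundamentalCoweight

section SignCoweight

/-- `μ` represents `η` on `S` as `ζ ↦ (-1) ^ ⟪ζ, μ⟫`. -/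
def IsSignCoweight (S : Set V) (η : V → ℤ) (μ : V) : Prop :=
  ∀ ζ ∈ S, ∃ n : ℤ, ⟪ζ, μ⟫ = n ∧ η ζ = n.negOnePow

variable {Rad B S : Set V} {η : V → ℤ} {μ : V}

lemma IsSignCoweight.closure (hB : B ⊆ AddSubgroup.closure Rad)
    (hval : ∀ x ∈ AddSubgroup.closure Rad, η x = 1 ∨ η x = -1)
    (hmul : ∀ x ∈ AddSubgroup.closure Rad, ∀ y ∈ AddSubgroup.closure Rad,
      η (x + y) = η x * η y)
    (hμ : IsSignCoweight B η μ) : IsSignCoweight (AddSubgroup.closure B) η μ := by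
  have hle : AddSubgroup.closure B ≤ AddSubgroup.closure Rad := AddSubgroup.closure_le _ |>.2 hB
  have hzero : η 0 = 1 := by
    have h := hmul 0 (zero_mem _) 0 (zero_mem _)
    rw [add_zero] at h
    rcases hval 0 (zero_mem _) with h' | h'
    · exact h'
    · rw [h'] at h
      omega
  intro ζ hζ
  induction hζ using AddSubgroup.closure_induction with
  | mem x hx => exact hμ x hx
  | zero => exact ⟨0, by simp, by simp [hzero]⟩
  | add x y hx hy ihx ihy =>
    obtain ⟨m, hm, hηm⟩ := ihx
    obtain ⟨n, hn, hηn⟩ := ihy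
    refine ⟨m + n, by simp [inner_add_left, hm, hn], ?_⟩
    rw [hmul x (hle hx) y (hle hy), hηm, hηn, Int.negOnePow_add, Units.val_mul]
  | neg x hx ih =>
    obtain ⟨m, hm, hηm⟩ := ih
    refine ⟨-m, by simp [inner_neg_left, hm], ?_⟩
    have h := hmul x (hle hx) (-x) (neg_mem (hle hx))
    rw [add_neg_cancel, hzero] at h
    rw [Int.negOnePow_neg, ← hηm]
    rcases hval x (hle hx) with h' | h' <;> rw [h'] at h ⊢ <;> omega

lemma IsSignCoweight.sub_two_smul (hμ : IsSignCoweight S η μ) {y : V}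
    (hy : ∀ ζ ∈ S, ∃ m : ℤ, ⟪ζ, y⟫ = m) : IsSignCoweight S η (μ - (2 : ℝ) • y) := by
  intro ζ hζ
  obtain ⟨n, hn, hηn⟩ := hμ ζ hζ
  obtain ⟨m, hm⟩ := hy ζ hζ
  refine ⟨n - 2 * m, by simp [inner_sub_right, real_inner_smul_right, hn, hm], ?_⟩
  rw [Int.negOnePow_sub, Int.negOnePow_two_mul, mul_one, hηn]

lemma isClosed_setOf_isSignCoweight : IsClosed {μ | IsSignCoweight S η μ} := by
  have : {μ | IsSignCoweight S η μ} =
      ⋂ ζ ∈ S, (⟪ζ, ·⟫) ⁻¹' ((↑) '' {n : ℤ | η ζ = n.negOnePow}) := by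
    ext μ
    simp only [Set.mem_iInter, Set.mem_preimage, Set.mem_image]
    exact forall₂_congr fun ζ _ => exists_congr fun n => and_comm.trans (and_congr_right' eq_comm)
  rw [this]
  exact isClosed_biInter fun ζ _ => (Int.isClosedEmbedding_coe_real.isClosedMap _
    (isClosed_discrete _)).preimage (continuous_const.inner continuous_id)

end SignCoweight

section Perturbation

variable {Rad : Set V} {w : V}

/-- A small perturbation `μ + t • w` of `μ` in a regular direction `w`. -/
lemma exists_isRegular_inner_nonneg (hfin : Rad.Finite) (hw : IsRegular Rad w) (μ : V) :
    ∃ v : V, IsRegular Rad v ∧ ∀ ζ ∈ Rad, 0 < ⟪ζ, v⟫ → 0 ≤ ⟪ζ, μ⟫ := by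
  have hev : ∀ᶠ t in nhdsWithin (0 : ℝ) (Set.Ioi 0), ∀ ζ ∈ Rad,
      ⟪ζ, μ + t • w⟫ ≠ 0 ∧ (0 < ⟪ζ, μ + t • w⟫ → 0 ≤ ⟪ζ, μ⟫) := by
    refine hfin.eventually_all.2 fun ζ hζ => ?_
    simp only [inner_add_right, real_inner_smul_right]
    rcases eq_or_ne ⟪ζ, μ⟫ 0 with h | h
    · filter_upwards [self_mem_nhdsWithin] with t (ht : 0 < t)
      rw [h, zero_add]
      exact ⟨mul_ne_zero ht.ne' (hw ζ hζ), fun _ => le_rfl⟩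
    · have hcont : Continuous fun t : ℝ => ⟪ζ, μ⟫ * (⟪ζ, μ⟫ + t * ⟪ζ, w⟫) := by fun_prop
      have hlim := (hcont.tendsto 0).mono_left (nhdsWithin_le_nhds (s := Set.Ioi 0))
      have hpos : 0 < ⟪ζ, μ⟫ * (⟪ζ, μ⟫ + 0 * ⟪ζ, w⟫) := by
        rw [zero_mul, add_zero]
        exact mul_self_pos.2 h
      filter_upwards [hlim.eventually_const_lt hpos] with t ht
      refine ⟨fun h0 => by simp [h0] at ht, fun hpos => ?_⟩
      exact (pos_of_mul_pos_left ht hpos.le).le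
  obtain ⟨t, ht⟩ := hev.exists
  exact ⟨μ + t • w, fun ζ hζ => (ht ζ hζ).1, fun ζ hζ => (ht ζ hζ).2⟩

end Perturbation

lemma inner_le_inner_self_of_norm_le_norm_sub_two_smul {x y : V} (h : ‖x‖ ≤ ‖x - (2 : ℝ) • y‖) :
    ⟪x, y⟫ ≤ ⟪y, y⟫ := by
  have h2 : ‖x‖ ^ 2 ≤ ‖x - (2 : ℝ) • y‖ ^ 2 := pow_le_pow_left₀ (norm_nonneg x) h 2
  rw [← real_inner_self_eq_norm_sq, ← real_inner_self_eq_norm_sq] at h2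
  simp only [inner_sub_left, inner_sub_right, real_inner_smul_left, real_inner_smul_right,
    real_inner_comm x y] at h2
  linarith

section Main

variable [FiniteDimensional ℝ V] {Rad : Set V} {η : V → ℤ} {μ v : V}

lemma exists_isRegular (hRS : IsRootSystem Rad) : ∃ w : V, IsRegular Rad w := by
  have : Finite Rad := hRS.finite.to_subtype
  obtain ⟨f, hf⟩ := Module.exists_dual_forall_apply_ne_zero (K := ℝ) ((↑) : Rad → V)
    fun ζ => hRS.nonzero ζ ζ.2
  refine ⟨(InnerProductSpace.toDual ℝ V).symm (LinearMap.toContinuousLinearMap f), ?_⟩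
  intro ζ hζ
  rw [real_inner_comm, InnerProductSpace.toDual_symm_apply]
  exact hf ⟨ζ, hζ⟩

lemma exists_isSignCoweight (hRS : IsRootSystem Rad)
    (hval : ∀ x ∈ AddSubgroup.closure Rad, η x = 1 ∨ η x = -1)
    (hmul : ∀ x ∈ AddSubgroup.closure Rad, ∀ y ∈ AddSubgroup.closure Rad,
      η (x + y) = η x * η y) :
    ∃ μ : V, IsSignCoweight Rad η μ := by
  classical
  obtain ⟨w, hw⟩ := exists_isRegular hRS
  obtain ⟨b, hb⟩ := exists_basis_simpleBase hRS hw
  have : Finite (simpleBase Rad w) := Module.Finite.finite_basis b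
  have : Fintype (simpleBase Rad w) := Fintype.ofFinite _
  have hsimple (i : simpleBase Rad w) : b i ∈ Rad := (basis_mem_simpleBase hb i).1.1
  have hk (i : simpleBase Rad w) : ∃ k : ℤ, η (b i) = k.negOnePow := by
    rcases hval _ (AddSubgroup.subset_closure (hsimple i)) with h | h
    exacts [⟨0, h⟩, ⟨1, h⟩]
  choose k hk using hk
  refine ⟨∑ i, (k i : ℝ) • fundCoweight b i, fun ζ hζ => ?_⟩
  refine IsSignCoweight.closure (fun _ hα => AddSubgroup.subset_closure hα.1.1) hval hmul ?_ ζ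
    (hw.mem_closure_simpleBase hRS hζ)
  rintro _ hα
  obtain ⟨i, rfl⟩ : _ ∈ Set.range b := hb ▸ hα
  refine ⟨k i, ?_, hk i⟩
  simp [inner_sum, real_inner_smul_right, inner_basis_fundCoweight]

lemma exists_isSignCoweight_forall_norm_le (hRS : IsRootSystem Rad)
    (hval : ∀ x ∈ AddSubgroup.closure Rad, η x = 1 ∨ η x = -1)
    (hmul : ∀ x ∈ AddSubgroup.closure Rad, ∀ y ∈ AddSubgroup.closure Rad,
      η (x + y) = η x * η y) :
    ∃ μ : V, IsSignCoweight Rad η μ ∧ ∀ x, IsSignCoweight Rad η x → ‖μ‖ ≤ ‖x‖ := by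
  obtain ⟨μ, hμ, hdist⟩ := isClosed_setOf_isSignCoweight.exists_infDist_eq_dist
    (exists_isSignCoweight hRS hval hmul) 0
  refine ⟨μ, hμ, fun x hx => ?_⟩
  have h := Metric.infDist_le_dist_of_mem (x := (0 : V))
    (show x ∈ {μ | IsSignCoweight Rad η μ} from hx)
  rwa [hdist, dist_zero_left, dist_zero_left] at h

/-- If `α ≠ β` were simple with `η = -1`, then `μ - 2 ϖ_β` would beat `μ` in norm, because the
`α`-coordinate of the fundamental coweight `ϖ_β` is positive. -/
theorem IsSignCoweight.subsingleton_simpleBase (hRS : IsRootSystem Rad) (hirr : IsIrreducible Rad)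
    (hμ : IsSignCoweight Rad η μ) (hmin : ∀ x, IsSignCoweight Rad η x → ‖μ‖ ≤ ‖x‖)
    (hv : IsRegular Rad v) (hvμ : ∀ ζ ∈ Rad, 0 < ⟪ζ, v⟫ → 0 ≤ ⟪ζ, μ⟫) :
    {α ∈ simpleBase Rad v | η α = -1}.Subsingleton := by
  classical
  rintro _ ⟨hα, hηα⟩ _ ⟨hβ, hηβ⟩
  obtain ⟨b, hb⟩ := exists_basis_simpleBase hRS hv
  have : Finite (simpleBase Rad v) := Module.Finite.finite_basis b
  have : Fintype (simpleBase Rad v) := Fintype.ofFinite _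
  obtain ⟨i, rfl⟩ : _ ∈ Set.range b := hb ▸ hα
  obtain ⟨j, rfl⟩ : _ ∈ Set.range b := hb ▸ hβ
  by_contra hij
  have hij : i ≠ j := fun h => hij (h ▸ rfl)
  have hsimple := basis_mem_simpleBase hb
  set c := b.repr (fundCoweight b j)
  have hc (k : simpleBase Rad v) : 0 < c k := repr_fundCoweight_pos hRS hirr hv hb k j
  have hpair (k : simpleBase Rad v) : 0 ≤ ⟪b k, μ⟫ := hvμ _ (hsimple k).1.1 (hsimple k).1.2
  have hodd (k : simpleBase Rad v) (hk : η (b k) = -1) : 1 ≤ ⟪b k, μ⟫ := by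
    obtain ⟨n, hn, hηn⟩ := hμ _ (hsimple k).1.1
    have hn_odd : Odd n := (Int.negOnePow_eq_neg_one_iff n).1 (Units.val_injective (hηn ▸ hk))
    have : 0 ≤ n := by exact_mod_cast hn ▸ hpair k
    rw [hn]
    exact_mod_cast (show 1 ≤ n by rcases hn_odd with ⟨m, rfl⟩; omega)
  have hupper : ⟪μ, fundCoweight b j⟫ ≤ c j := by
    rw [← inner_fundCoweight]
    refine inner_le_inner_self_of_norm_le_norm_sub_two_smul (hmin _ (hμ.sub_two_smul ?_))
    intro ζ hζ
    rw [real_inner_comm, inner_fundCoweight]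
    exact exists_int_repr hRS hv hb hζ j
  have hlower : c i + c j ≤ ⟪μ, fundCoweight b j⟫ := by
    have hexp : ⟪μ, fundCoweight b j⟫ = ∑ k, c k * ⟪b k, μ⟫ := by
      conv_lhs => rw [← b.sum_repr (fundCoweight b j)]
      rw [inner_sum]
      exact Finset.sum_congr rfl fun k _ => by rw [real_inner_smul_right, real_inner_comm]
    calc c i + c j ≤ c i * ⟪b i, μ⟫ + c j * ⟪b j, μ⟫ := by
          nlinarith [hc i, hc j, hodd i hηα, hodd j hηβ]
      _ = ∑ k ∈ {i, j}, c k * ⟪b k, μ⟫ := (Finset.sum_pair (f := fun k => c k * ⟪b k, μ⟫) hij).symm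
      _ ≤ ∑ k, c k * ⟪b k, μ⟫ :=
          Finset.sum_le_sum_of_subset_of_nonneg (Finset.subset_univ _)
            fun k _ _ => mul_nonneg (hc k).le (hpair k)
      _ = ⟪μ, fundCoweight b j⟫ := hexp.symm
  linarith [hc i]

end Main

/-- for any homomorphism `η` from the root lattice of an irreducible root
system to `{±1}` there is a base of simple roots on which `η` takes the value `-1` at
most once. -/
theorem stmt15 {V : Type*} [NormedAddCommGroup V] [InnerProductSpace ℝ V]
    [FiniteDimensional ℝ V] (Rad : Set V) (hRS : IsRootSystem Rad)
    (hirr : IsIrreducible Rad) (η : V → ℤ)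
    (hval : ∀ x ∈ AddSubgroup.closure Rad, η x = 1 ∨ η x = -1)
    (hmul : ∀ x ∈ AddSubgroup.closure Rad, ∀ y ∈ AddSubgroup.closure Rad,
      η (x + y) = η x * η y) :
    ∃ v : V, IsRegular Rad v ∧
      ∀ α ∈ simpleBase Rad v, ∀ β ∈ simpleBase Rad v,
        η α = -1 → η β = -1 → α = β := by
  obtain ⟨μ, hμ, hmin⟩ := exists_isSignCoweight_forall_norm_le hRS hval hmul
  obtain ⟨w, hw⟩ := exists_isRegular hRS
  obtain ⟨v, hv, hvμ⟩ := exists_isRegular_inner_nonneg hRS.finite hw μ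
  exact ⟨v, hv, fun α hα β hβ hηα hηβ =>
    hμ.subsingleton_simpleBase hRS hirr hmin hv hvμ ⟨hα, hηα⟩ ⟨hβ, hηβ⟩⟩

end PaperRS
end

section
/- Let Rad be a root system in a finite-dimensional real inner product space V, let t be an involution of Rad, let v be an S-chamber vector for t, and let ω ∈ V satisfy (α, ω) ∈ ℤ for every α ∈ Rad. If (α − t(α), ω) ∈ 2ℤ for every simple root α ∈ B(v) with t(α) ≠ ±α, then (α − t(α), ω) ∈ 2ℤ for every α ∈ Rad. -/
open scoped RealInnerProductSpace

namespace PaperRS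

variable {V : Type*} [NormedAddCommGroup V] [InnerProductSpace ℝ V]

/-- if `ω` is in the dual lattice and `(α - t α, ω)` is even for every
complex simple root of an S-chamber for `t`, then `(α - t α, ω)` is even for every
root `α`. -/
theorem stmt18 {V : Type*} [NormedAddCommGroup V] [InnerProductSpace ℝ V]
    [FiniteDimensional ℝ V] (Rad : Set V) (hRS : IsRootSystem Rad)
    (t : V ≃ₗᵢ[ℝ] V) (ht : IsInvolution Rad t) (v : V) (hv : IsSChamber Rad t v)
    (ω : V) (hω : ∀ α ∈ Rad, ∃ n : ℤ, ⟪α, ω⟫ = (n : ℝ))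
    (hB : ∀ α ∈ simpleBase Rad v, t α ≠ α → t α ≠ -α →
      ∃ n : ℤ, ⟪α - t α, ω⟫ = 2 * (n : ℝ)) :
    ∀ α ∈ Rad, ∃ n : ℤ, ⟪α - t α, ω⟫ = 2 * (n : ℝ) := by
  obtain ⟨hreg, hSch⟩ := hv
  -- simple roots satisfy the conclusion
  have hsimple : ∀ α ∈ simpleBase Rad v, ∃ n : ℤ, ⟪α - t α, ω⟫ = 2 * (n : ℝ) := by
    intro α hα
    by_cases h1 : t α = α
    · exact ⟨0, by rw [h1]; simp⟩
    by_cases h2 : t α = -α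
    · obtain ⟨n, hn⟩ := hω α hα.1.1
      refine ⟨n, ?_⟩
      rw [h2, sub_neg_eq_add, inner_add_left, hn]; ring
    · exact hB α hα h1 h2
  -- finiteness setup
  have hposfin : (posRoots Rad v).Finite := hRS.finite.subset (fun x hx => hx.1)
  classical
  set F : Finset V := hposfin.toFinset with hF
  have hFmem : ∀ x, x ∈ F ↔ x ∈ posRoots Rad v := fun x => hposfin.mem_toFinset
  -- every positive root satisfies the conclusion, by strong induction on height
  have hpos : ∀ n : ℕ, ∀ α ∈ posRoots Rad v,
      (F.filter (fun δ => ⟪δ, v⟫ < ⟪α, v⟫)).card = n →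
      ∃ m : ℤ, ⟪α - t α, ω⟫ = 2 * (m : ℝ) := by
    intro n
    induction n using Nat.strong_induction_on with
    | _ n ih =>
      intro α hα hcard
      by_cases hs : α ∈ simpleBase Rad v
      · exact hsimple α hs
      · have hdec : ∃ β ∈ posRoots Rad v, ∃ γ ∈ posRoots Rad v, α = β + γ := by
          by_contra hcon
          exact hs ⟨hα, hcon⟩
        obtain ⟨β, hβ, γ, hγ, hαβγ⟩ := hdec
        have hαv : ⟪α, v⟫ = ⟪β, v⟫ + ⟪γ, v⟫ := by rw [hαβγ, inner_add_left]
        have hβlt : ⟪β, v⟫ < ⟪α, v⟫ := by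
          have := hγ.2; linarith
        have hγlt : ⟪γ, v⟫ < ⟪α, v⟫ := by
          have := hβ.2; linarith
        have key : ∀ δ ∈ posRoots Rad v, ⟪δ, v⟫ < ⟪α, v⟫ →
            (F.filter (fun x => ⟪x, v⟫ < ⟪δ, v⟫)).card < n := by
          intro δ hδ hδlt
          rw [← hcard]
          apply Finset.card_lt_card
          constructor
          · intro x hx
            rw [Finset.mem_filter] at hx ⊢
            exact ⟨hx.1, lt_trans hx.2 hδlt⟩
          · intro hsub
            have hδF : δ ∈ F.filter (fun x => ⟪x, v⟫ < ⟪α, v⟫) := by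
              rw [Finset.mem_filter, hFmem]; exact ⟨hδ, hδlt⟩
            have := hsub hδF
            rw [Finset.mem_filter] at this
            exact lt_irrefl _ this.2
        obtain ⟨m₁, hm₁⟩ := ih _ (key β hβ hβlt) β hβ rfl
        obtain ⟨m₂, hm₂⟩ := ih _ (key γ hγ hγlt) γ hγ rfl
        refine ⟨m₁ + m₂, ?_⟩
        have : ⟪α - t α, ω⟫ = ⟪β - t β, ω⟫ + ⟪γ - t γ, ω⟫ := by
          rw [hαβγ, map_add]
          rw [show β + γ - (t β + t γ) = (β - t β) + (γ - t γ) by abel, inner_add_left]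
        rw [this, hm₁, hm₂]; push_cast; ring
  -- conclusion
  intro α hα
  rcases lt_or_gt_of_ne (hreg α hα) with hneg | hposv
  · -- -α is a positive root
    have hnegmem : -α ∈ Rad := by
      have := hRS.reflMem α hα α hα
      have hα0 : (⟪α, α⟫ : ℝ) ≠ 0 := inner_self_ne_zero.mpr (hRS.nonzero α hα)
      have h2 : (2 : ℝ) * ⟪α, α⟫ / ⟪α, α⟫ = 2 := by field_simp
      rw [reflRoot, h2, two_smul] at this
      have : α - (α + α) = -α := by abel
      rwa [← this]
      -- careful
    have hmem : -α ∈ posRoots Rad v := by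
      refine ⟨hnegmem, ?_⟩
      rw [inner_neg_left]; linarith
    obtain ⟨m, hm⟩ := hpos _ (-α) hmem rfl
    refine ⟨-m, ?_⟩
    have : ⟪α - t α, ω⟫ = -⟪(-α) - t (-α), ω⟫ := by
      rw [map_neg]
      rw [show (-α) - (-(t α)) = -(α - t α) by abel, inner_neg_left]; ring
    rw [this, hm]; push_cast; ring
  · obtain ⟨m, hm⟩ := hpos _ α ⟨hα, hposv⟩ rfl
    exact ⟨m, hm⟩


end PaperRS
end
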